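/- Local differential privacy bounds maximal leakage: if a randomized map f_E : 𝕏 → ℤ satisfies ε-LDP with base 2, i.e., Pr[f_E(x) = z] ≤ 2^ε · Pr[f_E(x') = z] for all x, x' ∈ 𝕏 and z ∈ ℤ, then for Z = f_E(X) with any input distribution P_X of full support, the maximal leakage L(X → Z) = log₂(∑_z max_x P_{Z|X}(z|x)) ≤ ε. -/

import Mathlib

open scoped BigOperators
noncomputable section

/-- A pmf on a finite alphabet. -/
def IsPMF {X : Type} [Fintype X] (p : X → ℝ) : Prop :=
  (∀ x, 0 ≤ p x) ∧ ∑ x, p x = 1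

/-- A Markov kernel (randomized map) from X to Z. -/
def IsKernel {X Z : Type} [Fintype Z] (k : X → Z → ℝ) : Prop :=
  (∀ x z, 0 ≤ k x z) ∧ ∀ x, ∑ z, k x z = 1

/-- Closed form of maximal leakage: L(X → Z) = log₂(∑_z max_x P_{Z|X}(z|x)). -/
def maxLeak {X Z : Type} [Fintype X] [Fintype Z] [Nonempty X] (p : X → Z → ℝ) : ℝ :=
  Real.logb 2 (∑ z, Finset.univ.sup' Finset.univ_nonempty fun x => p x z / ∑ z', p x z')

/-! Since the kernel rows sum to one, the input weights cancel in `maxLeak`, leaving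
`log₂ ∑_z max_x k(x, z)`. Bounding every `k(x, z)` by `2^ε k(x₀, z)` for a fixed `x₀`
bounds the sum by `2^ε`, and the sum is at least `∑_z k(x₀, z) = 1 > 0`, so `log₂` applies. -/

open Finset

section

variable {X Z : Type} [Fintype X] [Fintype Z] [Nonempty X]

lemma maxLeak_weight_mul {k : X → Z → ℝ} (hk : ∀ x, ∑ z, k x z = 1) {w : X → ℝ}
    (hw : ∀ x, w x ≠ 0) :
    maxLeak (fun x z => w x * k x z) =
      Real.logb 2 (∑ z, univ.sup' univ_nonempty fun x => k x z) := by
  unfold maxLeak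
  congr! 3 with z _ x
  rw [← mul_sum, hk, mul_one, mul_div_cancel_left₀ _ (hw x)]

lemma sum_le_sum_sup' (k : X → Z → ℝ) (x₀ : X) :
    ∑ z, k x₀ z ≤ ∑ z, univ.sup' univ_nonempty fun x => k x z :=
  sum_le_sum fun z _ => le_sup' (fun x => k x z) (mem_univ x₀)

lemma sum_sup'_le_mul_sum {k : X → Z → ℝ} {c : ℝ} {x₀ : X}
    (h : ∀ x z, k x z ≤ c * k x₀ z) :
    ∑ z, univ.sup' univ_nonempty (fun x => k x z) ≤ c * ∑ z, k x₀ z := by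
  rw [mul_sum]
  exact sum_le_sum fun z _ => sup'_le _ _ fun x _ => h x z

end

theorem ldp_bounds_maximal_leakage_general
    {X Z : Type} [Fintype X] [Fintype Z] [Nonempty X]
    (ε : ℝ) (k : X → Z → ℝ) (hk : IsKernel k)
    (hldp : ∀ x x' z, k x z ≤ (2 : ℝ) ^ ε * k x' z)
    (pX : X → ℝ) (hsupp : ∀ x, 0 < pX x) :
    maxLeak (fun x z => pX x * k x z) ≤ ε := by
  obtain ⟨x₀⟩ := ‹Nonempty X›
  have hsum_le := sum_sup'_le_mul_sum fun x z => hldp x x₀ z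
  have hsum_ge := sum_le_sum_sup' k x₀
  rw [hk.2 x₀, mul_one] at hsum_le
  rw [hk.2 x₀] at hsum_ge
  rw [maxLeak_weight_mul hk.2 fun x => (hsupp x).ne',
    Real.logb_le_iff_le_rpow one_lt_two (one_pos.trans_le hsum_ge)]
  exact hsum_le

/-- ε-local differential privacy (base 2) bounds maximal leakage:
if Pr[f_E(x) = z] ≤ 2^ε · Pr[f_E(x') = z] for all x, x', z, then for Z = f_E(X)
with any full-support input distribution P_X, L(X → Z) ≤ ε. -/
theorem ldp_bounds_maximal_leakage
    {X Z : Type} [Fintype X] [Fintype Z] [Nonempty X] [Nonempty Z]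
    (ε : ℝ) (k : X → Z → ℝ) (hk : IsKernel k)
    (hldp : ∀ x x' z, k x z ≤ (2 : ℝ) ^ ε * k x' z)
    (pX : X → ℝ) (hpX : IsPMF pX) (hsupp : ∀ x, 0 < pX x) :
    maxLeak (fun x z => pX x * k x z) ≤ ε :=
  ldp_bounds_maximal_leakage_general ε k hk hldp pX hsupp
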